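/- Let n ≥ 2 and N ≥ 1 be integers, A = (a_{ij})_{1≤i,j≤n-1} ∈ M_{n-1}(ℂ), and η_{(1)}, η_{(2)} ∈ (ℂ∖{0})^n with D_i = diag(η_{0i},…,η_{n-1,i}) for i = 1,2. Suppose there exists a complex number ζ with ζ^N = 1 such that A₀* D₁ A₀ = ζ D₂, where A₀* is the conjugate transpose of A₀. Then for all m, m' ∈ X(n,N), ∑_{x∈X(n,N)} binom(N,x) (∏_{i=0}^{n-1} η_{i1}^{x_i}) φ_A(x;m) conj(φ_A(x;m')) = δ_{m,m'} (∏_{i=0}^{n-1} η_{i2}^{m_i}) / binom(N,m). -/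

import Mathlib

/-!
Pair the generating function of `φ_A(x; ·)` in variables `t` with the conjugate generating
function in a second set of variables `s`, weighted by `binom(N,x) ∏ᵢ η_{i1}^{xᵢ}`. By the
multinomial theorem the weighted sum over `x ∈ X(n,N)` is the `N`-th power of the bilinear form
`sᵀ (A₀* D₁ A₀) t = ζ ∑ⱼ η_{j2} sⱼ tⱼ`, and since `ζ^N = 1` the coefficient of `t^m s^{m'}` in it
is `δ_{m m'} binom(N,m) ∏ᵢ η_{i2}^{mᵢ}`. On the other side that coefficient is
`binom(N,m) binom(N,m')` times the orthogonality sum. Polynomials in `s` and `t` are taken in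
`MvPolynomial (Fin n) (MvPolynomial (Fin n) ℂ)`, with `t` the outer variables.
-/

open Finset MvPolynomial

/-- `X(n,N)`: the set of tuples in `ℕ₀ⁿ` with coordinate sum `N`,
as a `Finset` of functions `Fin n → ℕ`. -/
def XSet (n N : ℕ) : Finset (Fin n → ℕ) :=
  (Fintype.piFinset fun _ : Fin n => Finset.range (N + 1)).filter fun x => ∑ i, x i = N

/-- The multivariate Krawtchouk polynomial `φ_A(x;m)` associated to the bordered
matrix `A₀` (whose row `0` and column `0` consist of ones): it is the coefficient of
`t^m` in the generating function `∏ᵢ (∑ⱼ (A₀)ᵢⱼ tⱼ)^{xᵢ}`, divided by the multinomial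
coefficient `binom(N, m) = (∑ mᵢ)! / ∏ mᵢ!`. -/
noncomputable def phi {n : ℕ} (A0 : Matrix (Fin n) (Fin n) ℂ) (x m : Fin n → ℕ) : ℂ :=
  MvPolynomial.coeff (Finsupp.equivFunOnFinite.symm m)
      (∏ i, (∑ j, MvPolynomial.C (A0 i j) * MvPolynomial.X j) ^ x i)
    / (Nat.multinomial Finset.univ m : ℂ)

section Multinomial

variable {S : Type*} [CommSemiring S] {n : ℕ}

lemma XSet_eq_piAntidiag (n N : ℕ) : XSet n N = piAntidiag univ N := by
  ext x
  simp only [XSet, mem_filter, Fintype.mem_piFinset, mem_range, mem_piAntidiag, Nat.lt_succ_iff,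
    mem_univ, implies_true, and_true, and_iff_right_iff_imp]
  rintro rfl i
  exact single_le_sum (fun j _ => Nat.zero_le (x j)) (mem_univ i)

lemma sum_pow_eq_sum_XSet (N : ℕ) (f : Fin n → S) :
    (∑ i, f i) ^ N = ∑ x ∈ XSet n N, (Nat.multinomial univ x : S) * ∏ i, f i ^ x i := by
  rw [XSet_eq_piAntidiag, sum_pow_eq_sum_piAntidiag]

lemma prod_C_mul_X_pow (c : Fin n → S) (x : Fin n → ℕ) :
    ∏ i, (C (c i) * X i : MvPolynomial (Fin n) S) ^ x i
      = monomial (Finsupp.equivFunOnFinite.symm x) (∏ i, c i ^ x i) := by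
  simp only [C_mul_X_eq_monomial, monomial_pow, ← monomial_sum_prod,
    Finsupp.smul_single, smul_eq_mul, mul_one, Finsupp.equivFunOnFinite_symm_eq_sum]

lemma coeff_sum_C_mul_X_pow (c : Fin n → S) {N : ℕ} {m : Fin n → ℕ} (hm : m ∈ XSet n N) :
    coeff (Finsupp.equivFunOnFinite.symm m) ((∑ i, C (c i) * X i) ^ N)
      = Nat.multinomial univ m * ∏ i, c i ^ m i := by
  simp only [sum_pow_eq_sum_XSet, prod_C_mul_X_pow, ← map_natCast (C : S →+* _), C_mul_monomial,
    coeff_sum, coeff_monomial, (Finsupp.equivFunOnFinite.symm).injective.eq_iff]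
  rw [sum_ite_eq', if_pos hm]

end Multinomial

section LinForm

variable {σ ι R S : Type*} [CommSemiring R] [CommSemiring S]

lemma coeff_coeff_C_mul_map_C (p q : MvPolynomial σ S) (m m' : σ →₀ ℕ) :
    coeff m' (coeff m (C p * map C q)) = coeff m q * coeff m' p := by
  rw [coeff_C_mul, coeff_map, mul_comm, coeff_C_mul]

variable [Fintype σ]

noncomputable def linForm (v : σ → S) : MvPolynomial σ S :=
  ∑ j, C (v j) * X j

lemma linForm_smul (c : S) (v : σ → S) : linForm (c • v) = C c * linForm v := by
  simp only [linForm, mul_sum, Pi.smul_apply, smul_eq_mul, map_mul, mul_assoc]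

lemma map_linForm (f : R →+* S) (v : σ → R) : map f (linForm v) = linForm (f ∘ v) := by
  simp only [linForm, map_sum, map_mul, map_C, map_X, Function.comp_apply]

lemma linForm_diagonal_apply [DecidableEq σ] (d : σ → S) (j : σ) :
    linForm (fun k => Matrix.diagonal d k j) = C (d j) * X j := by
  rw [linForm, Fintype.sum_eq_single j fun k hk => by simp [Matrix.diagonal_apply_ne _ hk],
    Matrix.diagonal_apply_eq]

lemma sum_C_linForm_mul_map_C_linForm [Fintype ι] (L : Matrix σ ι S) (V : Matrix ι σ S) :
    ∑ i, C (linForm fun k => L k i) * map C (linForm (V i))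
      = ∑ j, C (linForm fun k => (L * V) k j) * X j := by
  simp only [linForm, Matrix.mul_apply, map_sum, map_mul, map_C, map_X, mul_sum, sum_mul]
  rw [sum_comm]
  refine sum_congr rfl fun j _ => ?_
  rw [sum_comm]
  exact sum_congr rfl fun k _ => sum_congr rfl fun i _ => by ring

end LinForm

section Krawtchouk

variable {n N : ℕ} (A0 : Matrix (Fin n) (Fin n) ℂ)

noncomputable def krawtchoukGen (x : Fin n → ℕ) : MvPolynomial (Fin n) ℂ :=
  ∏ i, linForm (A0 i) ^ x i

lemma phi_eq_coeff_krawtchoukGen (x m : Fin n → ℕ) :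
    phi A0 x m
      = coeff (Finsupp.equivFunOnFinite.symm m) (krawtchoukGen A0 x) / Nat.multinomial univ m :=
  rfl

theorem sum_multinomial_mul_coeff_krawtchoukGen_mul_conj (η1 η2 : Fin n → ℂ) (ζ : ℂ)
    (hζ : ζ ^ N = 1) (hA : A0.conjTranspose * Matrix.diagonal η1 * A0 = ζ • Matrix.diagonal η2)
    {m : Fin n → ℕ} (hm : m ∈ XSet n N) (m' : Fin n → ℕ) :
    ∑ x ∈ XSet n N, (Nat.multinomial univ x : ℂ) * (∏ i, η1 i ^ x i) *
        coeff (Finsupp.equivFunOnFinite.symm m) (krawtchoukGen A0 x) *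
        starRingEnd ℂ (coeff (Finsupp.equivFunOnFinite.symm m') (krawtchoukGen A0 x))
      = if m = m' then (Nat.multinomial univ m : ℂ) * ∏ i, η2 i ^ m i else 0 := by
  set L := A0.conjTranspose * Matrix.diagonal η1
  have hL : ∀ i, linForm (fun k => L k i)
      = C (η1 i) * map (starRingEnd ℂ) (linForm (A0 i)) := by
    intro i
    rw [map_linForm, ← linForm_smul]
    congr 1
    ext k
    simp [L, Matrix.mul_diagonal, mul_comm]
  have hprod : ∀ x, ∏ i, (C (linForm fun k => L k i) * map C (linForm (A0 i))) ^ x i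
      = C (C (∏ i, η1 i ^ x i) * map (starRingEnd ℂ) (krawtchoukGen A0 x))
          * map C (krawtchoukGen A0 x) := by
    intro x
    simp only [hL, krawtchoukGen, mul_pow, prod_mul_distrib, map_prod, map_pow, map_mul]
  have hdiag : ∑ i, C (linForm fun k => L k i) * map C (linForm (A0 i))
      = ∑ j, C (C (ζ * η2 j) * X j) * X j := by
    simp only [sum_C_linForm_mul_map_C_linForm, L, hA, ← Matrix.diagonal_smul,
      linForm_diagonal_apply, Pi.smul_apply, smul_eq_mul]
  have hmN : ∑ i, m i = N := (mem_filter.mp hm).2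
  calc _ = coeff (Finsupp.equivFunOnFinite.symm m') (coeff (Finsupp.equivFunOnFinite.symm m)
          ((∑ i, C (linForm fun k => L k i) * map C (linForm (A0 i))) ^ N)) := by
        rw [sum_pow_eq_sum_XSet, coeff_sum, coeff_sum]
        refine sum_congr rfl fun x _ => ?_
        rw [hprod, ← map_natCast C, ← mul_assoc, ← map_mul, coeff_coeff_C_mul_map_C]
        rw [← map_natCast (C : ℂ →+* MvPolynomial (Fin n) ℂ), ← mul_assoc, ← map_mul, coeff_C_mul,
          coeff_map]
        ring
    _ = coeff (Finsupp.equivFunOnFinite.symm m') ((Nat.multinomial univ m : MvPolynomial _ ℂ) *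
          monomial (Finsupp.equivFunOnFinite.symm m) (∏ i, (ζ * η2 i) ^ m i)) := by
        rw [hdiag, coeff_sum_C_mul_X_pow _ hm, prod_C_mul_X_pow]
    _ = _ := by
        simp only [← map_natCast C, coeff_C_mul, coeff_monomial,
          (Finsupp.equivFunOnFinite.symm).injective.eq_iff, mul_pow, prod_mul_distrib, prod_pow_eq_pow_sum, hmN, hζ, one_mul, mul_ite,
          mul_zero]

end Krawtchouk

/-- Sufficiency: if `A₀* D₁ A₀ = ζ D₂` for some `N`-th root of unity `ζ`, then the
multivariate Krawtchouk polynomials satisfy the orthogonality relation. -/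
theorem krawtchouk_orthogonality_of_matrix_relation
    (n N : ℕ)
    (A0 : Matrix (Fin n) (Fin n) ℂ)
    (η1 η2 : Fin n → ℂ)
    (ζ : ℂ) (hζ : ζ ^ N = 1)
    (hA : A0.conjTranspose * Matrix.diagonal η1 * A0 = ζ • Matrix.diagonal η2) :
    ∀ m ∈ XSet n N, ∀ m' ∈ XSet n N,
      ∑ x ∈ XSet n N,
          (Nat.multinomial Finset.univ x : ℂ) * (∏ i, η1 i ^ x i) *
            phi A0 x m * (starRingEnd ℂ) (phi A0 x m')
        = if m = m' then (∏ i, η2 i ^ m i) / (Nat.multinomial Finset.univ m : ℂ)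
          else 0 := by
  intro m hm m' _
  have hM (k : Fin n → ℕ) : (Nat.multinomial univ k : ℂ) ≠ 0 :=
    Nat.cast_ne_zero.mpr (Nat.multinomial_pos _ _).ne'
  calc _ = (∑ x ∈ XSet n N, (Nat.multinomial univ x : ℂ) * (∏ i, η1 i ^ x i) *
            coeff (Finsupp.equivFunOnFinite.symm m) (krawtchoukGen A0 x) *
            starRingEnd ℂ (coeff (Finsupp.equivFunOnFinite.symm m') (krawtchoukGen A0 x))) /
          (Nat.multinomial univ m * Nat.multinomial univ m') := by
        simp only [phi_eq_coeff_krawtchoukGen, map_div₀, map_natCast, sum_div]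
        exact sum_congr rfl fun x _ => by ring
    _ = _ := by
        rw [sum_multinomial_mul_coeff_krawtchoukGen_mul_conj A0 η1 η2 ζ hζ hA hm m']
        split_ifs with h
        · rw [h, mul_div_mul_left _ _ (hM m')]
        · exact zero_div _
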